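/- Let E be a point with ‖E‖ = d > 1 and consider points X_p on the unit sphere with normal N_p = X_p. Writing β_p for the angle between X_p and E, the distance ‖E − X_p‖ = √(d² + 1 − 2d cos β_p) is strictly increasing in β_p on [0, π], and the NPL intensity B_p = e·(d cos β_p − 1)/(d² + 1 − 2d cos β_p)^{3/2} is strictly decreasing in β_p on the lit region where d cos β_p > 1. Hence the set of lit sphere points with a fixed intensity value is exactly a circle {X : ⟨X, E/‖E‖⟩ = cos β₀} for some fixed β₀. -/

import Mathlib

/-!
For a unit vector `X` and `d = ‖E‖`, both `⟪X, E - X⟫ = ⟪X, E⟫ - 1` and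
`‖E - X‖² = d² + 1 - 2⟪X, E⟫` depend on `X` only through `t = ⟪X, E⟫ = d cos β`. The intensity
`e (t - 1) / (d² + 1 - 2t)^{3/2}` is strictly increasing in `t` on `[1, d]`: the numerator grows
from `0` while the denominator shrinks. Hence it is injective on the lit region, so a lit
isointensity set is a level set of `⟪X, E⟫`, i.e. a circle about the axis through `E`.
-/

open Real Set
open scoped RealInnerProductSpace

/-- The near point light intensity at a unit-sphere point `X`, written in terms of
`t = ⟪X, E⟫`, where `d = ‖E‖` and `e` is the power of the light. -/
noncomputable def nplIntensity (d e t : ℝ) : ℝ :=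
  e * (t - 1) / (d ^ 2 + 1 - 2 * t) ^ ((3 : ℝ) / 2)

theorem strictMonoOn_nplIntensity {d e : ℝ} (he : 0 < e) :
    StrictMonoOn (nplIntensity d e) (Icc 1 d) := by
  intro t₁ ht₁ t₂ ht₂ hlt
  have hden₂ : 0 < d ^ 2 + 1 - 2 * t₂ := by nlinarith [ht₁.1, ht₂.2]
  have hden : (d ^ 2 + 1 - 2 * t₂) ^ ((3 : ℝ) / 2) < (d ^ 2 + 1 - 2 * t₁) ^ ((3 : ℝ) / 2) :=
    rpow_lt_rpow hden₂.le (by linarith) (by norm_num)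
  have hnum : e * (t₁ - 1) < e * (t₂ - 1) := by gcongr
  have hpos₂ : 0 < (d ^ 2 + 1 - 2 * t₂) ^ ((3 : ℝ) / 2) := rpow_pos_of_pos hden₂ _
  unfold nplIntensity
  rw [div_lt_div_iff₀ (hpos₂.trans hden) hpos₂]
  exact mul_lt_mul'' hnum hden (mul_nonneg he.le (by linarith [ht₁.1])) hpos₂.le

section Sphere

variable {F : Type*} [NormedAddCommGroup F] [InnerProductSpace ℝ F] {E X : F}

theorem inner_sub_self_of_norm_eq_one (hX : ‖X‖ = 1) : ⟪X, E - X⟫ = ⟪X, E⟫ - 1 := by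
  rw [inner_sub_right, real_inner_self_eq_norm_sq, hX, one_pow]

theorem norm_sub_pow_three_of_norm_eq_one (hX : ‖X‖ = 1) :
    ‖E - X‖ ^ 3 = (‖E‖ ^ 2 + 1 - 2 * ⟪X, E⟫) ^ ((3 : ℝ) / 2) := by
  have hsq : ‖E - X‖ ^ 2 = ‖E‖ ^ 2 + 1 - 2 * ⟪X, E⟫ := by
    rw [norm_sub_sq_real, hX, real_inner_comm]; ring
  rw [← hsq, ← rpow_natCast_mul (norm_nonneg _)]
  norm_num

theorem intensity_eq_nplIntensity (hX : ‖X‖ = 1) (e : ℝ) :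
    e * ⟪X, E - X⟫ / ‖E - X‖ ^ 3 = nplIntensity ‖E‖ e ⟪X, E⟫ := by
  rw [inner_sub_self_of_norm_eq_one hX, norm_sub_pow_three_of_norm_eq_one hX, nplIntensity]

theorem inner_le_norm_of_norm_eq_one (hX : ‖X‖ = 1) : ⟪X, E⟫ ≤ ‖E‖ := by
  simpa [hX] using real_inner_le_norm X E

theorem setOf_lit_intensity_eq {e : ℝ} (he : 0 < e) {X₀ : F} (hX₀ : ‖X₀‖ = 1)
    (hlit : 1 < ⟪X₀, E⟫) :
    {X | ‖X‖ = 1 ∧ 0 < ⟪X, E - X⟫ ∧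
        e * ⟪X, E - X⟫ / ‖E - X‖ ^ 3 = nplIntensity ‖E‖ e ⟪X₀, E⟫} =
      {X | ‖X‖ = 1 ∧ ⟪X, E⟫ = ⟪X₀, E⟫} := by
  have hmem₀ : ⟪X₀, E⟫ ∈ Icc 1 ‖E‖ := ⟨hlit.le, inner_le_norm_of_norm_eq_one hX₀⟩
  ext X
  simp only [mem_ofPred_eq]
  constructor
  · rintro ⟨hX, hpos, hv⟩
    rw [inner_sub_self_of_norm_eq_one hX] at hpos
    rw [intensity_eq_nplIntensity hX] at hv
    exact ⟨hX, (strictMonoOn_nplIntensity he).injOn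
      ⟨by linarith, inner_le_norm_of_norm_eq_one hX⟩ hmem₀ hv⟩
  · rintro ⟨hX, hinner⟩
    refine ⟨hX, ?_, ?_⟩
    · rw [inner_sub_self_of_norm_eq_one hX]; linarith
    · rw [intensity_eq_nplIntensity hX, hinner]

end Sphere

/-- For a near point light at distance `d > 1` from the center
of the unit sphere: the distance `‖E − X‖ = √(d² + 1 − 2d cos β)` is strictly
increasing in the angle `β ∈ [0, π]`, the NPL intensity
`e·(d cos β − 1)/(d² + 1 − 2d cos β)^{3/2}` is strictly decreasing in `β`
on the lit region `{β : d cos β > 1}`, and every nonempty isointensity set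
of lit sphere points is a circle `{X : ⟨X, E/‖E‖⟩ = cos β₀}` on the sphere. -/
theorem stmt_10 (d e : ℝ) (hd : 1 < d) (he : 0 < e) :
    (StrictMonoOn (fun β => Real.sqrt (d ^ 2 + 1 - 2 * d * Real.cos β))
      (Set.Icc 0 π)) ∧
    (StrictAntiOn
      (fun β => e * (d * Real.cos β - 1) / (d ^ 2 + 1 - 2 * d * Real.cos β) ^ ((3 : ℝ) / 2))
      {β | β ∈ Set.Icc 0 π ∧ 1 < d * Real.cos β}) ∧
    (∀ E : EuclideanSpace ℝ (Fin 3), ‖E‖ = d → ∀ v : ℝ,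
      ({X : EuclideanSpace ℝ (Fin 3) |
          ‖X‖ = 1 ∧ 0 < (inner ℝ X (E - X) : ℝ) ∧
          e * (inner ℝ X (E - X) : ℝ) / ‖E - X‖ ^ 3 = v}).Nonempty →
      ∃ β₀ : ℝ, β₀ ∈ Set.Icc 0 π ∧
        {X : EuclideanSpace ℝ (Fin 3) |
          ‖X‖ = 1 ∧ 0 < (inner ℝ X (E - X) : ℝ) ∧
          e * (inner ℝ X (E - X) : ℝ) / ‖E - X‖ ^ 3 = v} =
        {X : EuclideanSpace ℝ (Fin 3) |
          ‖X‖ = 1 ∧ (inner ℝ X ((‖E‖)⁻¹ • E) : ℝ) = Real.cos β₀}) := by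
  have hd₀ : 0 < d := by linarith
  refine ⟨fun β₁ hβ₁ β₂ hβ₂ hlt => ?_, ?_, ?_⟩
  · have hcos := strictAntiOn_cos hβ₁ hβ₂ hlt
    exact sqrt_lt_sqrt (by nlinarith [cos_le_one β₁]) (by nlinarith)
  · have hproj : StrictAntiOn (fun β => d * cos β) {β | β ∈ Icc 0 π ∧ 1 < d * cos β} :=
      fun β₁ hβ₁ β₂ hβ₂ hlt => mul_lt_mul_of_pos_left (strictAntiOn_cos hβ₁.1 hβ₂.1 hlt) hd₀
    have hmaps : MapsTo (fun β => d * cos β) {β | β ∈ Icc 0 π ∧ 1 < d * cos β} (Icc 1 d) :=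
      fun β hβ => ⟨hβ.2.le, mul_le_of_le_one_right hd₀.le (cos_le_one β)⟩
    simpa only [Function.comp_def, nplIntensity, mul_assoc] using
      (strictMonoOn_nplIntensity he).comp_strictAntiOn hproj hmaps
  · rintro E rfl v ⟨X₀, hX₀, hpos₀, rfl⟩
    rw [inner_sub_self_of_norm_eq_one hX₀, sub_pos] at hpos₀
    have hle₀ := inner_le_norm_of_norm_eq_one (E := E) hX₀
    refine ⟨arccos (⟪X₀, E⟫ / ‖E‖), ⟨arccos_nonneg _, arccos_le_pi _⟩, ?_⟩
    rw [intensity_eq_nplIntensity hX₀, setOf_lit_intensity_eq he hX₀ hpos₀,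
      cos_arccos (by rw [le_div_iff₀ hd₀]; linarith) ((div_le_one hd₀).2 hle₀)]
    ext X
    simp only [mem_ofPred_eq, real_inner_smul_right, inv_mul_eq_div, div_left_inj' hd₀.ne']
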